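/- arXiv:hep-th/0404186 — 5 statements merged into one kernel-verified Lean document; each statement's English description precedes it below -/
import Mathlib

section
/- Let n ≥ 1, let ω and W be symmetric real n×n matrices with ω·W = 1 (W is the inverse of ω), and let k₀ ∈ ℝ. On E = (Fin n → ℝ) × ℝ × (Fin n → ℝ) with points p = (x, c₀, c), define F_{ij}(p) = (1/2)·(k₀·(1 − exp(2c₀)) − Σ_{k,h} W_{kh}·c_k·c_h)·ω_{ij} + c_i·c_j, and the vector fields X_i : E → E by X_i(p) = (e_i, c_i, (F_{ji}(p))_{j}), where e_i is the i-th standard basis vector of Fin n → ℝ. Then for all i, j and every p ∈ E the Lie bracket is given by fderiv X_j p (X_i p) − fderiv X_i p (X_j p) = (0, 0, m ↦ −k₀·(c_i·ω_{mj} − c_j·ω_{mi})). In particular, if k₀ = 0 the vector fields X_1, …, X_n pairwise commute, so the GHSS Pfaff system with constant (flat) metric ω is involutive. -/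
/-!
Differentiating `X_j` along `X_i` only touches the `c₀`- and `c`-slots. In the `c₀`-slot the
bracket is `F_{ji} - F_{ij} = 0` since `ω` is symmetric. In the `c`-slot, write
`F_{·i} = A ω_{·i} + c c_i`; because `ω W = W ω = 1`, the derivative of `Q(c) = cᵀ W c` along
this column is `(k₀ (1 - exp (2 c₀)) + Q) c_i`, and after antisymmetrising in `i, j` all that
survives is `-k₀ (c_i ω_{·j} - c_j ω_{·i})`.
-/

open Finset Real
open scoped Matrix

theorem Matrix.sum_sum_mul_mul_eq_of_mul_eq_one {ι R : Type*} [Fintype ι] [DecidableEq ι]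
    [CommSemiring R] {N M : Matrix ι ι R} (hNM : N * M = 1) (c : ι → R) (i : ι) :
    ∑ k, ∑ h, c k * N k h * M h i = c i := by
  have h := congrFun (vecMul_vecMul c N M) i
  rw [hNM, vecMul_one] at h
  rw [← h, sum_comm]
  simp only [vecMul, dotProduct, sum_mul]

theorem hasDerivAt_snd_snd_add_smul {E F ι : Type*} [AddCommGroup E] [Module ℝ E]
    [AddCommGroup F] [Module ℝ F] (p v : E × F × (ι → ℝ)) (k : ι) :
    HasDerivAt (fun t : ℝ => (p + t • v).2.2 k) (v.2.2 k) 0 := by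
  simpa using ((hasDerivAt_id (0:ℝ)).mul_const (v.2.2 k)).const_add (p.2.2 k)

section GHSS

variable {n : ℕ} (ω W : Matrix (Fin n) (Fin n) ℝ) (k₀ : ℝ)

noncomputable def ghssF (p : (Fin n → ℝ) × ℝ × (Fin n → ℝ)) (i j : Fin n) : ℝ :=
  (1/2) * (k₀ * (1 - exp (2 * p.2.1)) - ∑ k, ∑ h, W k h * p.2.2 k * p.2.2 h) * ω i j
    + p.2.2 i * p.2.2 j

noncomputable def ghssField (i : Fin n) (p : (Fin n → ℝ) × ℝ × (Fin n → ℝ)) :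
    (Fin n → ℝ) × ℝ × (Fin n → ℝ) :=
  (Pi.single i 1, p.2.2 i, fun j => ghssF ω W k₀ p j i)

variable {ω} in
theorem ghssF_symm (hω : ω.IsSymm) (p : (Fin n → ℝ) × ℝ × (Fin n → ℝ)) (i j : Fin n) :
    ghssF ω W k₀ p i j = ghssF ω W k₀ p j i := by
  simp only [ghssF, hω.apply i j]
  ring

variable {ω W} in
theorem sum_sum_mul_ghssF (hω : ω.IsSymm) (hωW : ω * W = 1)
    (p : (Fin n → ℝ) × ℝ × (Fin n → ℝ)) (i : Fin n) :
    ∑ k, ∑ h, W k h * (ghssF ω W k₀ p k i * p.2.2 h + p.2.2 k * ghssF ω W k₀ p h i) =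
      (k₀ * (1 - exp (2 * p.2.1)) + ∑ k, ∑ h, W k h * p.2.2 k * p.2.2 h) * p.2.2 i := by
  have hWω : W * ω = 1 := mul_eq_one_comm.mp hωW
  have hWtω : Wᵀ * ω = 1 := by
    rw [← hω.eq, ← Matrix.transpose_mul, hωW, Matrix.transpose_one]
  set c := p.2.2
  set Q := ∑ k, ∑ h, W k h * c k * c h
  set A := (1/2) * (k₀ * (1 - exp (2 * p.2.1)) - Q) with hA
  calc ∑ k, ∑ h, W k h * (ghssF ω W k₀ p k i * c h + c k * ghssF ω W k₀ p h i)
      = A * ∑ k, ∑ h, c h * Wᵀ h k * ω k i + A * ∑ k, ∑ h, c k * W k h * ω h i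
          + 2 * c i * Q := by
        have hF : ∀ k, ghssF ω W k₀ p k i = A * ω k i + c k * c i := fun k => rfl
        simp only [hF, Q, mul_sum, ← sum_add_distrib, Matrix.transpose_apply]
        refine sum_congr rfl fun k _ => sum_congr rfl fun h _ => ?_
        ring
    _ = (k₀ * (1 - exp (2 * p.2.1)) + Q) * c i := by
        rw [sum_comm, Matrix.sum_sum_mul_mul_eq_of_mul_eq_one hWtω,
          Matrix.sum_sum_mul_mul_eq_of_mul_eq_one hWω, hA]
        ring

noncomputable def ghssFDeriv (p v : (Fin n → ℝ) × ℝ × (Fin n → ℝ)) (i j : Fin n) : ℝ :=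
  (1/2) * (-(k₀ * (exp (2 * p.2.1) * (2 * v.2.1)))
      - ∑ k, ∑ h, W k h * (v.2.2 k * p.2.2 h + p.2.2 k * v.2.2 h)) * ω i j
    + (v.2.2 i * p.2.2 j + p.2.2 i * v.2.2 j)

theorem hasDerivAt_ghssF_add_smul (p v : (Fin n → ℝ) × ℝ × (Fin n → ℝ)) (i j : Fin n) :
    HasDerivAt (fun t : ℝ => ghssF ω W k₀ (p + t • v) i j) (ghssFDeriv ω W k₀ p v i j) 0 := by
  have hc := hasDerivAt_snd_snd_add_smul p v
  have hc₀ : HasDerivAt (fun t : ℝ => (p + t • v).2.1) v.2.1 0 := by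
    simpa using ((hasDerivAt_id (0:ℝ)).mul_const v.2.1).const_add p.2.1
  have hQ : HasDerivAt (fun t : ℝ => ∑ k, ∑ h, W k h * (p + t • v).2.2 k * (p + t • v).2.2 h)
      (∑ k, ∑ h, W k h * (v.2.2 k * p.2.2 h + p.2.2 k * v.2.2 h)) 0 := by
    refine (HasDerivAt.fun_sum (u := univ) fun k _ => HasDerivAt.fun_sum (u := univ) fun h _ =>
      ((hc k).const_mul (W k h)).mul (hc h)).congr_deriv ?_
    simp only [zero_smul, add_zero]
    refine sum_congr rfl fun k _ => sum_congr rfl fun h _ => ?_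
    ring
  refine ((((((hc₀.const_mul 2).exp.const_sub 1).const_mul k₀).sub hQ).const_mul
    (1/2 : ℝ)).mul_const (ω i j) |>.add ((hc i).mul (hc j))).congr_deriv ?_
  simp only [ghssFDeriv, zero_smul, add_zero]
  ring

theorem fderiv_ghssField_apply (j : Fin n) (p v : (Fin n → ℝ) × ℝ × (Fin n → ℝ)) :
    fderiv ℝ (ghssField ω W k₀ j) p v = (0, v.2.2 j, fun m => ghssFDeriv ω W k₀ p v m j) := by
  have hdiff : DifferentiableAt ℝ (ghssField ω W k₀ j) p := by
    unfold ghssField ghssF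
    fun_prop
  have hline : HasDerivAt (fun t : ℝ => ghssField ω W k₀ j (p + t • v))
      (0, v.2.2 j, fun m => ghssFDeriv ω W k₀ p v m j) 0 :=
    (hasDerivAt_const _ _).prodMk ((hasDerivAt_snd_snd_add_smul p v j).prodMk
      (hasDerivAt_pi.2 fun m => hasDerivAt_ghssF_add_smul ω W k₀ p v m j))
  rw [← hdiff.lineDeriv_eq_fderiv]
  exact HasLineDerivAt.lineDeriv hline

variable {ω W} in
theorem ghssField_bracket (hω : ω.IsSymm) (hωW : ω * W = 1) (i j : Fin n)
    (p : (Fin n → ℝ) × ℝ × (Fin n → ℝ)) :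
    fderiv ℝ (ghssField ω W k₀ j) p (ghssField ω W k₀ i p)
        - fderiv ℝ (ghssField ω W k₀ i) p (ghssField ω W k₀ j p) =
      (0, 0, fun m => -k₀ * (p.2.2 i * ω m j - p.2.2 j * ω m i)) := by
  rw [fderiv_ghssField_apply, fderiv_ghssField_apply]
  simp only [ghssField, ghssFDeriv, Prod.mk_sub_mk, sub_self, sum_sum_mul_ghssF k₀ hω hωW]
  refine congrArg _ (Prod.ext (sub_eq_zero.2 (ghssF_symm W k₀ hω p j i)) (funext fun m => ?_))
  simp only [ghssF, hω.apply i j, Pi.sub_apply]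
  ring

end GHSS

theorem ghss_vector_fields_bracket_general
    (n : ℕ)
    (ω W : Matrix (Fin n) (Fin n) ℝ) (hω : ω.IsSymm)
    (hωW : ω * W = 1) (k₀ : ℝ)
    (F : ((Fin n → ℝ) × ℝ × (Fin n → ℝ)) → Fin n → Fin n → ℝ)
    (hF : ∀ p i j, F p i j =
      (1/2) * (k₀ * (1 - Real.exp (2 * p.2.1)) - ∑ k, ∑ h, W k h * p.2.2 k * p.2.2 h) * ω i j
      + p.2.2 i * p.2.2 j)
    (X : Fin n → ((Fin n → ℝ) × ℝ × (Fin n → ℝ)) → ((Fin n → ℝ) × ℝ × (Fin n → ℝ)))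
    (hX : ∀ i p, X i p = (Pi.single i 1, p.2.2 i, fun j => F p j i)) :
    ∀ (i j : Fin n) (p : (Fin n → ℝ) × ℝ × (Fin n → ℝ)),
      fderiv ℝ (X j) p (X i p) - fderiv ℝ (X i) p (X j p) =
      (0, 0, fun m => -k₀ * (p.2.2 i * ω m j - p.2.2 j * ω m i)) := by
  obtain rfl : F = ghssF ω W k₀ := funext₃ hF
  obtain rfl : X = ghssField ω W k₀ := funext₂ hX
  exact ghssField_bracket k₀ hω hωW

/-- The Lie bracket of the vector fields spanning the kernel of the GHSS Pfaff
system with constant metric `ω` is `[X_i, X_j](p) = (0, 0, −k₀·(c_i ω_{·j} − c_j ω_{·i}))`;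
in particular they commute when `k₀ = 0`. -/
theorem ghss_vector_fields_bracket
    (n : ℕ) (hn : 1 ≤ n)
    (ω W : Matrix (Fin n) (Fin n) ℝ) (hω : ω.IsSymm) (hW : W.IsSymm)
    (hωW : ω * W = 1) (k₀ : ℝ)
    (F : ((Fin n → ℝ) × ℝ × (Fin n → ℝ)) → Fin n → Fin n → ℝ)
    (hF : ∀ p i j, F p i j =
      (1/2) * (k₀ * (1 - Real.exp (2 * p.2.1)) - ∑ k, ∑ h, W k h * p.2.2 k * p.2.2 h) * ω i j
      + p.2.2 i * p.2.2 j)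
    (X : Fin n → ((Fin n → ℝ) × ℝ × (Fin n → ℝ)) → ((Fin n → ℝ) × ℝ × (Fin n → ℝ)))
    (hX : ∀ i p, X i p = (Pi.single i 1, p.2.2 i, fun j => F p j i)) :
    ∀ (i j : Fin n) (p : (Fin n → ℝ) × ℝ × (Fin n → ℝ)),
      fderiv ℝ (X j) p (X i p) - fderiv ℝ (X i) p (X j p) =
      (0, 0, fun m => -k₀ * (p.2.2 i * ω m j - p.2.2 j * ω m i)) :=
  ghss_vector_fields_bracket_general n ω W hω hωW k₀ F hF X hX
end

section
/- Let n ≥ 1 and let Ω be a real n×n matrix with IsUnit (det Ω). Let A : ℝ → Matrix (Fin n) (Fin n) ℝ be differentiable with A(t) invertible for every t, and let c : ℝ → ℝ be differentiable, such that A(t)ᵀ · Ω · A(t) = exp(2·c(t)) • Ω for all t ∈ ℝ. Then for every t: trace( A(t)⁻¹ · (deriv A)(t) ) = n · (deriv c)(t). (This is the relation Σ_{i,j} b^j_i Ω^i_j = n σ₀ linking the trace of the logarithmic derivative of the Jacobian to the conformal factor, for a constant metric Ω.) -/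
/-!
Differentiating `AᵀΩA = e^{2c}Ω` and writing `A' = AB` with `B = A⁻¹A'` gives
`BᵀΩ + ΩB = 2c'Ω`: the logarithmic derivative lies in the conformal Lie algebra of `Ω`.
Multiplying by `Ω⁻¹` turns `BᵀΩ` into a conjugate of `Bᵀ`, so taking traces yields
`2 tr B = 2n c'`.
-/

open Matrix

attribute [local instance] Matrix.normedAddCommGroup Matrix.normedSpace

section MatrixCalculus

variable {𝕜 : Type*} [NontriviallyNormedField 𝕜] {l m n : Type*} {t : 𝕜}

theorem Matrix.hasDerivAt_iff [Fintype m] [Fintype n] {f : 𝕜 → Matrix m n 𝕜}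
    {f' : Matrix m n 𝕜} :
    HasDerivAt f f' t ↔ ∀ i j, HasDerivAt (fun s => f s i j) (f' i j) t :=
  hasDerivAt_pi.trans (forall_congr' fun _ => hasDerivAt_pi)

theorem HasDerivAt.matrix_transpose [Fintype m] [Fintype n] {f : 𝕜 → Matrix m n 𝕜}
    {f' : Matrix m n 𝕜} (hf : HasDerivAt f f' t) : HasDerivAt (fun s => (f s)ᵀ) f'ᵀ t :=
  Matrix.hasDerivAt_iff.2 fun i j => Matrix.hasDerivAt_iff.1 hf j i

theorem HasDerivAt.matrix_mul [Fintype l] [Fintype m] [Fintype n] {f : 𝕜 → Matrix l m 𝕜}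
    {g : 𝕜 → Matrix m n 𝕜} {f' : Matrix l m 𝕜} {g' : Matrix m n 𝕜} (hf : HasDerivAt f f' t)
    (hg : HasDerivAt g g' t) :
    HasDerivAt (fun s => f s * g s) (f' * g t + f t * g') t := by
  refine Matrix.hasDerivAt_iff.2 fun i j => ?_
  simp only [mul_apply, Matrix.add_apply, ← Finset.sum_add_distrib]
  exact HasDerivAt.fun_sum fun k _ =>
    (Matrix.hasDerivAt_iff.1 hf i k).mul (Matrix.hasDerivAt_iff.1 hg k j)

end MatrixCalculus

section ConformalAlgebra

variable {n R : Type*} [Fintype n] [DecidableEq n] [CommRing R] {Ω B E E' : Matrix n n R}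
  {e s : R}

theorem Matrix.two_mul_trace_eq_of_transpose_mul_add_mul_eq_smul (hΩ : IsUnit Ω.det)
    (h : Bᵀ * Ω + Ω * B = s • Ω) : 2 * trace B = Fintype.card n * s := by
  have hconj : Ω⁻¹ * (Bᵀ * Ω + Ω * B) = Ω⁻¹ * Bᵀ * Ω + B := by
    rw [Matrix.mul_add, ← Matrix.mul_assoc, ← Matrix.mul_assoc, nonsing_inv_mul Ω hΩ,
      Matrix.one_mul]
  have htrace := congrArg trace hconj
  rw [h, Matrix.mul_smul, nonsing_inv_mul Ω hΩ, trace_smul, trace_one, trace_add,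
    trace_mul_cycle, mul_nonsing_inv Ω hΩ, Matrix.one_mul, trace_transpose] at htrace
  rw [two_mul, ← htrace, smul_eq_mul, mul_comm]

theorem Matrix.inv_mul_transpose_mul_add_mul_eq_smul (hE : IsUnit E.det) (he : IsUnit e)
    (hconf : Eᵀ * Ω * E = e • Ω) (hderiv : E'ᵀ * Ω * E + Eᵀ * Ω * E' = (e * s) • Ω) :
    (E⁻¹ * E')ᵀ * Ω + Ω * (E⁻¹ * E') = s • Ω := by
  have hEB : E * (E⁻¹ * E') = E' := mul_nonsing_inv_cancel_left E E' hE
  generalize E⁻¹ * E' = B at hEB ⊢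
  subst hEB
  have hscaled : e • (Bᵀ * Ω + Ω * B) = e • (s • Ω) := by
    calc e • (Bᵀ * Ω + Ω * B) = Bᵀ * (Eᵀ * Ω * E) + (Eᵀ * Ω * E) * B := by
          rw [hconf, Matrix.mul_smul, Matrix.smul_mul, smul_add]
      _ = (E * B)ᵀ * Ω * E + Eᵀ * Ω * (E * B) := by
          rw [transpose_mul]; simp only [Matrix.mul_assoc]
      _ = e • (s • Ω) := by rw [hderiv, smul_smul]
  exact (he.smul_left_cancel).1 hscaled

end ConformalAlgebra

section ConformalCurve

variable {n : Type*} [Fintype n] {Ω : Matrix n n ℝ} {A : ℝ → Matrix n n ℝ} {c : ℝ → ℝ}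

def IsConformalCurve (Ω : Matrix n n ℝ) (A : ℝ → Matrix n n ℝ) (c : ℝ → ℝ) : Prop :=
  ∀ t, (A t)ᵀ * Ω * A t = Real.exp (2 * c t) • Ω

theorem IsConformalCurve.transpose_mul_mul_add_transpose_mul_mul_eq {A' : Matrix n n ℝ}
    {σ t : ℝ}
    (h : IsConformalCurve Ω A c) (hA : HasDerivAt A A' t) (hc : HasDerivAt c σ t) :
    A'ᵀ * Ω * A t + (A t)ᵀ * Ω * A' = (Real.exp (2 * c t) * (2 * σ)) • Ω := by
  have hlhs := (hA.matrix_transpose.matrix_mul (hasDerivAt_const t Ω)).matrix_mul hA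
  have hrhs := ((hc.const_mul 2).exp).smul_const Ω
  rw [funext h] at hlhs
  simpa using hlhs.unique hrhs

end ConformalCurve

theorem trace_log_deriv_conformal_general
    (n : ℕ)
    (Ω : Matrix (Fin n) (Fin n) ℝ) (hΩ : IsUnit Ω.det)
    (A : ℝ → Matrix (Fin n) (Fin n) ℝ) (hA : Differentiable ℝ A)
    (hAinv : ∀ t, IsUnit (A t).det)
    (c : ℝ → ℝ) (hc : Differentiable ℝ c)
    (h : ∀ t, (A t)ᵀ * Ω * A t = Real.exp (2 * c t) • Ω) :
    ∀ t, Matrix.trace ((A t)⁻¹ * deriv A t) = n * deriv c t := by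
  intro t
  have hderiv := IsConformalCurve.transpose_mul_mul_add_transpose_mul_mul_eq h
    (hA t).hasDerivAt (hc t).hasDerivAt
  have hlogDeriv := inv_mul_transpose_mul_add_mul_eq_smul (hAinv t) (Real.exp_pos _).ne'.isUnit
    (h t) hderiv
  have htrace := two_mul_trace_eq_of_transpose_mul_add_mul_eq_smul hΩ hlogDeriv
  rw [Fintype.card_fin] at htrace
  exact mul_left_cancel₀ two_ne_zero (htrace.trans (by ring))

/-- For a differentiable family `A(t)` of invertible Jacobian matrices satisfying the
conformal condition `A(t)ᵀ Ω A(t) = e^{2c(t)} Ω` for an invertible constant metric `Ω`,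
the trace of the logarithmic derivative of `A` equals `n` times the derivative of the
conformal factor: `trace(A⁻¹ A') = n c'`. -/
theorem trace_log_deriv_conformal
    (n : ℕ) (hn : 1 ≤ n)
    (Ω : Matrix (Fin n) (Fin n) ℝ) (hΩ : IsUnit Ω.det)
    (A : ℝ → Matrix (Fin n) (Fin n) ℝ) (hA : Differentiable ℝ A)
    (hAinv : ∀ t, IsUnit (A t).det)
    (c : ℝ → ℝ) (hc : Differentiable ℝ c)
    (h : ∀ t, (A t)ᵀ * Ω * A t = Real.exp (2 * c t) • Ω) :
    ∀ t, Matrix.trace ((A t)⁻¹ * deriv A t) = n * deriv c t :=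
  trace_log_deriv_conformal_general n Ω hΩ A hA hAinv c hc h
end

section
/- (Cartan's Lemma.) Let K be a field, V a K-vector space, and v : Fin n → V a linearly independent family. Suppose w : Fin n → V satisfies Σ_{i} ι(v i) * ι(w i) = 0 in the exterior algebra of V over K, where ι is the canonical embedding of V into its exterior algebra and * is the algebra multiplication (so ι(a)*ι(b) represents a ∧ b). Then there exists a symmetric matrix of scalars a : Fin n → Fin n → K (a i j = a j i) such that w i = Σ_j (a i j) • (v j) for every i. -/
/-!
Pairing the relation `∑ vᵢ ∧ wᵢ = 0` with `f ∧ g` for arbitrary linear forms `f, g` gives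
`∑ (f vᵢ g wᵢ - f wᵢ g vᵢ) = 0`. Let `φ` be a family of linear forms dual to `v`, and put
`a i j = φ j (w i)`. Taking `f = φ s, g = φ t` shows that `a` is symmetric; taking `f = φ s` and
`g` arbitrary shows that every `g` kills `w s - ∑ j, a s j • v j`.
-/

open ExteriorAlgebra Module

namespace ExteriorAlgebra

variable {R M : Type*} [CommRing R] [AddCommGroup M] [Module R M]

noncomputable def wedgeDual (f g : Dual R M) : ExteriorAlgebra R M →ₗ[R] R :=
  liftAlternating <| Pi.single 2 <|
    (exteriorPower.alternatingMapToDual R M 2 ![f, g]).compAlternatingMap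
      (exteriorPower.ιMulti R 2)

theorem wedgeDual_ι_mul_ι (f g : Dual R M) (x y : M) :
    wedgeDual f g (ι R x * ι R y) = f x * g y - f y * g x := by
  rw [wedgeDual, liftAlternating_ι_mul, liftAlternating_ι]
  simp [Matrix.det_fin_two, mul_comm]

theorem sum_dual_mul_sub_eq_zero_of_sum_ι_mul_ι_eq_zero {κ : Type*} [Fintype κ] {v w : κ → M}
    (h : ∑ i, ι R (v i) * ι R (w i) = 0) (f g : Dual R M) :
    ∑ i, (f (v i) * g (w i) - f (w i) * g (v i)) = 0 := by
  simpa only [map_sum, wedgeDual_ι_mul_ι, map_zero] using congrArg (wedgeDual f g) h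

end ExteriorAlgebra

theorem LinearIndependent.exists_dual_apply_eq_ite {K V κ : Type*} [Field K] [AddCommGroup V]
    [Module K V] [DecidableEq κ] {v : κ → V} (hv : LinearIndependent K v) :
    ∃ φ : κ → Dual K V, ∀ i j, φ j (v i) = if i = j then 1 else 0 := by
  choose φ hφ using fun j ↦ LinearMap.exists_extend ((Basis.span hv).coord j)
  refine ⟨φ, fun i j ↦ ?_⟩
  simpa [Finsupp.single_apply, eq_comm] using congr($(hφ j) (Basis.span hv i))

theorem exists_symm_of_sum_ι_mul_ι_eq_zero {K V κ : Type*} [Field K] [AddCommGroup V]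
    [Module K V] [Fintype κ] {v w : κ → V} (hv : LinearIndependent K v)
    (h : ∑ i, ι K (v i) * ι K (w i) = 0) :
    ∃ a : κ → κ → K, (∀ i j, a i j = a j i) ∧ ∀ i, w i = ∑ j, a i j • v j := by
  classical
  obtain ⟨φ, hφ⟩ := hv.exists_dual_apply_eq_ite
  have hpair := sum_dual_mul_sub_eq_zero_of_sum_ι_mul_ι_eq_zero h
  have hsymm (s t : κ) : φ t (w s) = φ s (w t) := by
    simpa [hφ, Finset.sum_sub_distrib, sub_eq_zero] using hpair (φ s) (φ t)
  refine ⟨fun i j ↦ φ j (w i), fun i j ↦ hsymm i j, fun s ↦ ?_⟩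
  rw [← sub_eq_zero, ← forall_dual_apply_eq_zero_iff K]
  intro g
  have hs : g (w s) = ∑ j, φ s (w j) * g (v j) := by
    simpa [hφ, Finset.sum_sub_distrib, sub_eq_zero] using hpair (φ s) g
  simp [hs, hsymm s, mul_comm]

/-- Cartan's Lemma: if `v : Fin n → V` is linearly independent and
`Σ_i v i ∧ w i = 0` in the exterior algebra, then `w i = Σ_j a i j • v j`
for a symmetric matrix of scalars `a`. -/
theorem cartan_lemma
    {K : Type*} [Field K] {V : Type*} [AddCommGroup V] [Module K V]
    {n : ℕ} (v : Fin n → V) (hv : LinearIndependent K v)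
    (w : Fin n → V)
    (h : ∑ i, ExteriorAlgebra.ι K (v i) * ExteriorAlgebra.ι K (w i) = 0) :
    ∃ a : Fin n → Fin n → K, (∀ i j, a i j = a j i) ∧
      ∀ i, w i = ∑ j, a i j • v j :=
  exists_symm_of_sum_ι_mul_ι_eq_zero hv h
end

section
/- Let n ≥ 1, let ω and W be symmetric real n×n matrices with ω·W = 1, let k₀ ∈ ℝ, let U ⊆ (Fin n → ℝ) be open and connected, and let x₀ ∈ U. Suppose α, β : (Fin n → ℝ) → ℝ are C² on U and both satisfy the flat GHSS system on U: for all x ∈ U and all i, j, ∂_i∂_j α(x) = (1/2)·(k₀·(1 − exp(2·α(x))) − Σ_{k,h} W_{kh}·∂_kα(x)·∂_hα(x))·ω_{ij} + ∂_iα(x)·∂_jα(x), and likewise for β. If α(x₀) = β(x₀) and ∂_iα(x₀) = ∂_iβ(x₀) for all i, then α = β on U. (Solutions of the GHSS system are uniquely determined by their first-order jet c₀, c₁,…,c_n at a single point.) -/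
/-!
The GHSS system prescribes the whole Hessian of `α` as a smooth function of its first jet
`(α, ∇α)`, so the jet satisfies a first-order total differential equation `dJ = Φ(J)` with `Φ`
locally Lipschitz. Along any segment this restricts to an ODE, and Grönwall uniqueness shows that
two solutions with the same jet at one end agree at the other. Hence the set where the jets agree
is open; it is relatively closed by continuity, so it is all of the connected set `U`.
-/

open Set

section TotalDifferentialEquation

variable {E F : Type*} [NormedAddCommGroup E] [NormedSpace ℝ E]
  [NormedAddCommGroup F] [NormedSpace ℝ F] {Φ : F → E →L[ℝ] F} {g₁ g₂ : E → F}

theorem eq_of_hasFDerivAt_comp_of_segment (hΦ : LocallyLipschitz Φ) {p q : E}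
    (hg₁ : ∀ x ∈ segment ℝ p q, HasFDerivAt g₁ (Φ (g₁ x)) x)
    (hg₂ : ∀ x ∈ segment ℝ p q, HasFDerivAt g₂ (Φ (g₂ x)) x)
    (hp : g₁ p = g₂ p) : g₁ q = g₂ q := by
  set γ := AffineMap.lineMap (k := ℝ) p q
  have hγ : ∀ t ∈ Icc (0 : ℝ) 1, γ t ∈ segment ℝ p q := fun t ht =>
    segment_eq_image_lineMap ℝ p q ▸ mem_image_of_mem γ ht
  have hderiv {g : E → F} (hg : ∀ x ∈ segment ℝ p q, HasFDerivAt g (Φ (g x)) x) :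
      ∀ t ∈ Icc (0 : ℝ) 1, HasDerivAt (g ∘ γ) (Φ ((g ∘ γ) t) (q - p)) t := fun t ht =>
    (hg (γ t) (hγ t ht)).comp_hasDerivAt t AffineMap.hasDerivAt_lineMap
  have hcont {g : E → F} (hg : ∀ x ∈ segment ℝ p q, HasFDerivAt g (Φ (g x)) x) :
      ContinuousOn (g ∘ γ) (Icc 0 1) :=
    HasDerivAt.continuousOn (hderiv hg)
  set K := (g₁ ∘ γ) '' Icc 0 1 ∪ (g₂ ∘ γ) '' Icc 0 1
  have hK : IsCompact K := (isCompact_Icc.image_of_continuousOn (hcont hg₁)).union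
    (isCompact_Icc.image_of_continuousOn (hcont hg₂))
  obtain ⟨L, hL⟩ := LocallyLipschitzOn.exists_lipschitzOnWith_of_compact hK
    (((ContinuousLinearMap.apply ℝ F (q - p)).lipschitz.locallyLipschitz.comp hΦ).locallyLipschitzOn)
  have hsol := ODE_solution_unique_of_mem_Icc_right (v := fun _ u => Φ u (q - p))
    (s := fun _ => K) (fun _ _ => hL) (hcont hg₁)
    (fun t ht => (hderiv hg₁ t (Ico_subset_Icc_self ht)).hasDerivWithinAt)
    (fun t ht => .inl ⟨t, Ico_subset_Icc_self ht, rfl⟩) (hcont hg₂)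
    (fun t ht => (hderiv hg₂ t (Ico_subset_Icc_self ht)).hasDerivWithinAt)
    (fun t ht => .inr ⟨t, Ico_subset_Icc_self ht, rfl⟩) (by simpa [γ] using hp)
  simpa [γ] using hsol (right_mem_Icc.2 zero_le_one)

theorem IsPreconnected.eqOn_of_hasFDerivAt_comp (hΦ : LocallyLipschitz Φ) {U : Set E}
    (hUo : IsOpen U) (hUc : IsPreconnected U)
    (hg₁ : ∀ x ∈ U, HasFDerivAt g₁ (Φ (g₁ x)) x) (hg₂ : ∀ x ∈ U, HasFDerivAt g₂ (Φ (g₂ x)) x)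
    {x₀ : E} (hx₀ : x₀ ∈ U) (h : g₁ x₀ = g₂ x₀) : EqOn g₁ g₂ U := by
  set S := {x ∈ U | g₁ x = g₂ x}
  have hS : IsOpen S := by
    refine Metric.isOpen_iff.2 fun p ⟨hpU, hp⟩ => ?_
    obtain ⟨ε, hε, hball⟩ := Metric.isOpen_iff.1 hUo p hpU
    have hseg : ∀ x ∈ Metric.ball p ε, segment ℝ p x ⊆ U := fun x hx =>
      ((convex_ball p ε).segment_subset (Metric.mem_ball_self hε) hx).trans hball
    exact ⟨ε, hε, fun x hx => ⟨hball hx, eq_of_hasFDerivAt_comp_of_segment hΦ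
      (fun y hy => hg₁ y (hseg x hx hy)) (fun y hy => hg₂ y (hseg x hx hy)) hp⟩⟩
  have hcont {g : E → F} (hg : ∀ x ∈ U, HasFDerivAt g (Φ (g x)) x) : ContinuousOn g U :=
    fun x hx => (hg x hx).continuousAt.continuousWithinAt
  have hclosed : closure S ∩ U ⊆ S := fun x hx =>
    ⟨hx.2, EqOn.of_subset_closure (fun y hy => hy.2) ((hcont hg₁).mono inter_subset_right)
      ((hcont hg₂).mono inter_subset_right) (fun y hy => ⟨subset_closure hy, hy.1⟩)
      inter_subset_left hx⟩
  exact fun x hx => (hUc.subset_of_closure_inter_subset hS ⟨x₀, hx₀, hx₀, h⟩ hclosed hx).2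

end TotalDifferentialEquation

section FirstJet

noncomputable def firstJet {ι : Type*} [DecidableEq ι] (f : (ι → ℝ) → ℝ) (x : ι → ℝ) :
    ℝ × (ι → ℝ) :=
  (f x, fun j => fderiv ℝ f x (Pi.single j 1))

variable {ι : Type*} [Fintype ι]

/-- `dJ = jetField H J` for the jet `J = (f, ∇f)` is the system `∂ᵢ∂ⱼ f = H (f, ∇f) i j`. -/
noncomputable def jetField (H : ℝ × (ι → ℝ) → ι → ι → ℝ) (u : ℝ × (ι → ℝ)) :
    (ι → ℝ) →L[ℝ] ℝ × (ι → ℝ) :=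
  ∑ i, (ContinuousLinearMap.proj i).smulRight (u.2 i, H u i)

theorem jetField_apply_single [DecidableEq ι] (H : ℝ × (ι → ℝ) → ι → ι → ℝ)
    (u : ℝ × (ι → ℝ)) (i : ι) : jetField H u (Pi.single i 1) = (u.2 i, H u i) := by
  simp [jetField, Pi.single_apply]

theorem ContDiff.jetField {H : ℝ × (ι → ℝ) → ι → ι → ℝ} (hH : ContDiff ℝ 1 H) :
    ContDiff ℝ 1 (jetField H) :=
  ContDiff.sum fun i _ => contDiff_const.smulRight
    (((contDiff_apply ℝ ℝ i).comp contDiff_snd).prodMk ((contDiff_apply ℝ (ι → ℝ) i).comp hH))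

variable [DecidableEq ι] {H : ℝ × (ι → ℝ) → ι → ι → ℝ} {U : Set (ι → ℝ)}

theorem hasFDerivAt_firstJet {f : (ι → ℝ) → ℝ} (hUo : IsOpen U) (hf : ContDiffOn ℝ 2 f U)
    (hfH : ∀ x ∈ U, ∀ i j : ι,
      fderiv ℝ (fun y => fderiv ℝ f y (Pi.single j 1)) x (Pi.single i 1) = H (firstJet f x) i j)
    {x : ι → ℝ} (hx : x ∈ U) :
    HasFDerivAt (firstJet f) (jetField H (firstJet f x)) x := by
  have hfx : DifferentiableAt ℝ f x :=
    hf.differentiableOn (by norm_num) |>.differentiableAt (hUo.mem_nhds hx)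
  have hf'x : DifferentiableAt ℝ (fderiv ℝ f) x :=
    (hf.fderiv_of_isOpen hUo (m := 1) (by norm_num)).differentiableOn one_ne_zero
      |>.differentiableAt (hUo.mem_nhds hx)
  have hpartial (j : ι) : DifferentiableAt ℝ (fun y => fderiv ℝ f y (Pi.single j 1)) x :=
    hf'x.clm_apply (differentiableAt_const _)
  have hderiv := hfx.hasFDerivAt.prodMk (hasFDerivAt_pi.2 fun j => (hpartial j).hasFDerivAt)
  refine hderiv.congr_fderiv (ContinuousLinearMap.coe_injective
    (LinearMap.pi_ext' fun i => LinearMap.ext_ring ?_))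
  ext j
  · simp [jetField_apply_single, firstJet]
  · simpa [jetField_apply_single, firstJet] using hfH x hx i j

theorem IsPreconnected.eqOn_of_hessian_eq_comp_firstJet (hH : ContDiff ℝ 1 H)
    (hUo : IsOpen U) (hUc : IsPreconnected U) {f g : (ι → ℝ) → ℝ}
    (hf : ContDiffOn ℝ 2 f U) (hg : ContDiffOn ℝ 2 g U)
    (hfH : ∀ x ∈ U, ∀ i j : ι,
      fderiv ℝ (fun y => fderiv ℝ f y (Pi.single j 1)) x (Pi.single i 1) = H (firstJet f x) i j)
    (hgH : ∀ x ∈ U, ∀ i j : ι,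
      fderiv ℝ (fun y => fderiv ℝ g y (Pi.single j 1)) x (Pi.single i 1) = H (firstJet g x) i j)
    {x₀ : ι → ℝ} (hx₀ : x₀ ∈ U) (hjet : firstJet f x₀ = firstJet g x₀) : EqOn f g U :=
  fun _ hx => congrArg Prod.fst <| hUc.eqOn_of_hasFDerivAt_comp hH.jetField.locallyLipschitz hUo
    (fun _ => hasFDerivAt_firstJet hUo hf hfH) (fun _ => hasFDerivAt_firstJet hUo hg hgH) hx₀ hjet
    hx

end FirstJet

noncomputable def ghssHessian {n : ℕ} (ω W : Matrix (Fin n) (Fin n) ℝ) (k₀ : ℝ)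
    (u : ℝ × (Fin n → ℝ)) (i j : Fin n) : ℝ :=
  (1/2) * (k₀ * (1 - Real.exp (2 * u.1)) - ∑ k, ∑ h, W k h * u.2 k * u.2 h) * ω i j
    + u.2 i * u.2 j

theorem contDiff_ghssHessian {n : ℕ} (ω W : Matrix (Fin n) (Fin n) ℝ) (k₀ : ℝ) :
    ContDiff ℝ 1 (ghssHessian ω W k₀) := by
  refine contDiff_pi.2 fun i => contDiff_pi.2 fun j => ?_
  unfold ghssHessian
  fun_prop

theorem ghss_uniqueness_general
    (n : ℕ)
    (ω W : Matrix (Fin n) (Fin n) ℝ) (k₀ : ℝ)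
    (U : Set (Fin n → ℝ)) (hUo : IsOpen U) (hUc : IsConnected U)
    (x₀ : Fin n → ℝ) (hx₀ : x₀ ∈ U)
    (α β : (Fin n → ℝ) → ℝ)
    (hα : ContDiffOn ℝ 2 α U) (hβ : ContDiffOn ℝ 2 β U)
    (hαeq : ∀ x ∈ U, ∀ i j : Fin n,
      fderiv ℝ (fun y => fderiv ℝ α y (Pi.single j 1)) x (Pi.single i 1) =
      (1/2) * (k₀ * (1 - Real.exp (2 * α x)) -
        ∑ k, ∑ h, W k h * fderiv ℝ α x (Pi.single k 1) * fderiv ℝ α x (Pi.single h 1)) *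
        ω i j
      + fderiv ℝ α x (Pi.single i 1) * fderiv ℝ α x (Pi.single j 1))
    (hβeq : ∀ x ∈ U, ∀ i j : Fin n,
      fderiv ℝ (fun y => fderiv ℝ β y (Pi.single j 1)) x (Pi.single i 1) =
      (1/2) * (k₀ * (1 - Real.exp (2 * β x)) -
        ∑ k, ∑ h, W k h * fderiv ℝ β x (Pi.single k 1) * fderiv ℝ β x (Pi.single h 1)) *
        ω i j
      + fderiv ℝ β x (Pi.single i 1) * fderiv ℝ β x (Pi.single j 1))
    (h0 : α x₀ = β x₀)
    (h1 : ∀ i : Fin n, fderiv ℝ α x₀ (Pi.single i 1) = fderiv ℝ β x₀ (Pi.single i 1)) :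
    Set.EqOn α β U :=
  hUc.isPreconnected.eqOn_of_hessian_eq_comp_firstJet (contDiff_ghssHessian ω W k₀) hUo hα hβ
    hαeq hβeq hx₀ (Prod.ext h0 (funext h1))

/-- Solutions of the flat GHSS system on a connected open set are uniquely determined
by their first-order jet at a single point. -/
theorem ghss_uniqueness
    (n : ℕ) (hn : 1 ≤ n)
    (ω W : Matrix (Fin n) (Fin n) ℝ) (hω : ω.IsSymm) (hW : W.IsSymm)
    (hωW : ω * W = 1) (k₀ : ℝ)
    (U : Set (Fin n → ℝ)) (hUo : IsOpen U) (hUc : IsConnected U)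
    (x₀ : Fin n → ℝ) (hx₀ : x₀ ∈ U)
    (α β : (Fin n → ℝ) → ℝ)
    (hα : ContDiffOn ℝ 2 α U) (hβ : ContDiffOn ℝ 2 β U)
    (hαeq : ∀ x ∈ U, ∀ i j : Fin n,
      fderiv ℝ (fun y => fderiv ℝ α y (Pi.single j 1)) x (Pi.single i 1) =
      (1/2) * (k₀ * (1 - Real.exp (2 * α x)) -
        ∑ k, ∑ h, W k h * fderiv ℝ α x (Pi.single k 1) * fderiv ℝ α x (Pi.single h 1)) *
        ω i j
      + fderiv ℝ α x (Pi.single i 1) * fderiv ℝ α x (Pi.single j 1))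
    (hβeq : ∀ x ∈ U, ∀ i j : Fin n,
      fderiv ℝ (fun y => fderiv ℝ β y (Pi.single j 1)) x (Pi.single i 1) =
      (1/2) * (k₀ * (1 - Real.exp (2 * β x)) -
        ∑ k, ∑ h, W k h * fderiv ℝ β x (Pi.single k 1) * fderiv ℝ β x (Pi.single h 1)) *
        ω i j
      + fderiv ℝ β x (Pi.single i 1) * fderiv ℝ β x (Pi.single j 1))
    (h0 : α x₀ = β x₀)
    (h1 : ∀ i : Fin n, fderiv ℝ α x₀ (Pi.single i 1) = fderiv ℝ β x₀ (Pi.single i 1)) :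
    Set.EqOn α β U :=
  ghss_uniqueness_general n ω W k₀ U hUo hUc x₀ hx₀ α β hα hβ hαeq hβeq h0 h1
end

section
/- Let n ≥ 1 and let ω and W be symmetric real n×n matrices with ω·W = 1. For every x₀ ∈ (Fin n → ℝ), every c₀ ∈ ℝ and every c : Fin n → ℝ, there exist ε > 0 and a function α : (Fin n → ℝ) → ℝ which is C^∞ on the open ball B(x₀, ε), satisfies α(x₀) = c₀ and ∂_iα(x₀) = c_i for all i, and solves the flat GHSS system with k₀ = 0 on B(x₀, ε): for all x ∈ B(x₀, ε) and all i, j, ∂_i∂_j α(x) = ∂_iα(x)·∂_jα(x) − (1/2)·(Σ_{k,h} W_{kh}·∂_kα(x)·∂_hα(x))·ω_{ij}. (Local existence of GHSS solutions with arbitrarily prescribed first-order jet, guaranteed by the involutivity of the system.) -/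
namespace GHSSAux
open Matrix Finset ContinuousLinearMap

variable {n : ℕ}

/-- The quadratic function whose shifted negative logarithm solves the flat GHSS system. -/
noncomputable def uu (ω : Matrix (Fin n) (Fin n) ℝ) (c x₀ : Fin n → ℝ) (C : ℝ)
    (y : Fin n → ℝ) : ℝ :=
  1 - c ⬝ᵥ (y - x₀) + (C / 2) * ((y - x₀) ⬝ᵥ (ω *ᵥ (y - x₀)))

/-- The gradient of `uu`. -/
noncomputable def ww (ω : Matrix (Fin n) (Fin n) ℝ) (c x₀ : Fin n → ℝ) (C : ℝ)
    (y : Fin n → ℝ) : Fin n → ℝ :=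
  -c + C • (ω *ᵥ (y - x₀))

theorem uu_eq (ω : Matrix (Fin n) (Fin n) ℝ) (c x₀ : Fin n → ℝ) (C : ℝ) (y : Fin n → ℝ) :
    uu ω c x₀ C y = 1 - ∑ k, c k * (y k - x₀ k)
      + (C / 2) * ∑ k, (y k - x₀ k) * (∑ l, ω k l * (y l - x₀ l)) := by
  simp [uu, dotProduct, mulVec]

theorem ww_eq (ω : Matrix (Fin n) (Fin n) ℝ) (c x₀ : Fin n → ℝ) (C : ℝ) (y : Fin n → ℝ)
    (j : Fin n) :
    ww ω c x₀ C y j = -(c j) + C * ∑ k, ω j k * (y k - x₀ k) := by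
  simp [ww, dotProduct, mulVec]

/-- The derivative (as a continuous linear map) of `uu` at `y`. -/
noncomputable def Du (ω : Matrix (Fin n) (Fin n) ℝ) (c x₀ : Fin n → ℝ) (C : ℝ)
    (y : Fin n → ℝ) : (Fin n → ℝ) →L[ℝ] ℝ :=
  -(∑ k, c k • (proj k : (Fin n → ℝ) →L[ℝ] ℝ)) +
    (C / 2) • ∑ k, ((y k - x₀ k) • (∑ l, ω k l • (proj l : (Fin n → ℝ) →L[ℝ] ℝ))
      + (∑ l, ω k l * (y l - x₀ l)) • (proj k : (Fin n → ℝ) →L[ℝ] ℝ))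

/-- The (constant) derivative of `fun y => ww ω c x₀ C y j`. -/
noncomputable def Dw (ω : Matrix (Fin n) (Fin n) ℝ) (C : ℝ) (j : Fin n) :
    (Fin n → ℝ) →L[ℝ] ℝ :=
  C • ∑ k, ω j k • (proj k : (Fin n → ℝ) →L[ℝ] ℝ)

theorem hasFDerivAt_coord (x₀ : Fin n → ℝ) (k : Fin n) (y : Fin n → ℝ) :
    HasFDerivAt (fun y : Fin n → ℝ => y k - x₀ k)
      (proj k : (Fin n → ℝ) →L[ℝ] ℝ) y :=
  (ContinuousLinearMap.hasFDerivAt ((proj k : (Fin n → ℝ) →L[ℝ] ℝ))).sub_const (x₀ k)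

theorem hasFDerivAt_uu (ω : Matrix (Fin n) (Fin n) ℝ) (c x₀ : Fin n → ℝ) (C : ℝ)
    (y : Fin n → ℝ) : HasFDerivAt (uu ω c x₀ C) (Du ω c x₀ C y) y := by
  have h1 := hasFDerivAt_coord x₀ (y := y)
  have hs : ∀ k, HasFDerivAt (fun y : Fin n → ℝ => ∑ l, ω k l * (y l - x₀ l))
      (∑ l, ω k l • (proj l : (Fin n → ℝ) →L[ℝ] ℝ)) y :=
    fun k => HasFDerivAt.fun_sum fun l _ => (h1 l).const_mul (ω k l)
  have hlin : HasFDerivAt (fun y : Fin n → ℝ => ∑ k, c k * (y k - x₀ k))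
      (∑ k, c k • (proj k : (Fin n → ℝ) →L[ℝ] ℝ)) y :=
    HasFDerivAt.fun_sum fun k _ => (h1 k).const_mul (c k)
  have hq : HasFDerivAt
      (fun y : Fin n → ℝ => ∑ k, (y k - x₀ k) * (∑ l, ω k l * (y l - x₀ l)))
      (∑ k, ((y k - x₀ k) • (∑ l, ω k l • (proj l : (Fin n → ℝ) →L[ℝ] ℝ))
        + (∑ l, ω k l * (y l - x₀ l)) • (proj k : (Fin n → ℝ) →L[ℝ] ℝ))) y :=
    HasFDerivAt.fun_sum fun k _ => (h1 k).mul (hs k)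
  have h := (hlin.const_sub 1).add (hq.const_mul (C / 2))
  have hfun : uu ω c x₀ C = fun y : Fin n → ℝ =>
      (1 - ∑ k, c k * (y k - x₀ k))
        + (C / 2) * ∑ k, (y k - x₀ k) * (∑ l, ω k l * (y l - x₀ l)) := by
    funext z; rw [uu_eq]
  rw [hfun, Du]
  exact h

theorem hasFDerivAt_ww (ω : Matrix (Fin n) (Fin n) ℝ) (c x₀ : Fin n → ℝ) (C : ℝ)
    (j : Fin n) (y : Fin n → ℝ) :
    HasFDerivAt (fun y => ww ω c x₀ C y j) (Dw ω C j) y := by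
  have h1 := hasFDerivAt_coord x₀ (y := y)
  have h := ((HasFDerivAt.fun_sum fun k (_ : k ∈ Finset.univ) =>
    (h1 k).const_mul (ω j k)).const_mul C).const_add (-(c j))
  have hfun : (fun y => ww ω c x₀ C y j)
      = fun y : Fin n → ℝ => -(c j) + C * ∑ k, ω j k * (y k - x₀ k) := by
    funext z; rw [ww_eq]
  rw [hfun, Dw]
  exact h

theorem Dw_apply (ω : Matrix (Fin n) (Fin n) ℝ) (C : ℝ) (j i : Fin n) :
    Dw ω C j (Pi.single i 1) = C * ω j i := by
  simp [Dw, ContinuousLinearMap.sum_apply, Pi.single_apply, mul_ite,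
    Finset.sum_ite_eq']

theorem Du_apply (ω : Matrix (Fin n) (Fin n) ℝ) (hω : ω.IsSymm)
    (c x₀ : Fin n → ℝ) (C : ℝ) (y : Fin n → ℝ) (i : Fin n) :
    Du ω c x₀ C y (Pi.single i 1) = ww ω c x₀ C y i := by
  rw [ww_eq]
  simp only [Du, ContinuousLinearMap.add_apply, ContinuousLinearMap.neg_apply,
    ContinuousLinearMap.smul_apply, ContinuousLinearMap.sum_apply, proj_apply,
    Pi.single_apply, smul_eq_mul, mul_ite, mul_one, mul_zero,
    Finset.sum_add_distrib, Finset.sum_ite_eq', Finset.mem_univ, if_true]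
  have hsum : (∑ k, (y k - x₀ k) * ω k i) = ∑ k, ω i k * (y k - x₀ k) :=
    Finset.sum_congr rfl fun k _ => by rw [hω.apply i k]; ring
  rw [hsum]
  ring

theorem key (ω W : Matrix (Fin n) (Fin n) ℝ) (hω : ω.IsSymm) (hW : W.IsSymm)
    (hωW : ω * W = 1) (c x₀ : Fin n → ℝ) (C : ℝ)
    (hC : C = (1 / 2) * ∑ k, ∑ h, W k h * c k * c h) (y : Fin n → ℝ) :
    ∑ k, ∑ h, W k h * ww ω c x₀ C y k * ww ω c x₀ C y h
      = 2 * C * uu ω c x₀ C y := by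
  have hWω : W * ω = 1 := by
    have h := congrArg Matrix.transpose hωW
    rwa [Matrix.transpose_mul, hW.eq, hω.eq, Matrix.transpose_one] at h
  have h1 : ∑ k, ∑ h, W k h * ww ω c x₀ C y k * ww ω c x₀ C y h
      = ww ω c x₀ C y ⬝ᵥ (W *ᵥ ww ω c x₀ C y) := by
    simp only [dotProduct, mulVec, Finset.mul_sum]
    exact Finset.sum_congr rfl fun k _ => Finset.sum_congr rfl fun h _ => by ring
  rw [h1]
  have h2 : W *ᵥ ww ω c x₀ C y = -(W *ᵥ c) + C • (y - x₀) := by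
    rw [ww, Matrix.mulVec_add, Matrix.mulVec_neg, Matrix.mulVec_smul,
      Matrix.mulVec_mulVec, hWω, Matrix.one_mulVec]
  rw [h2, ww]
  have e1 : c ⬝ᵥ (W *ᵥ c) = 2 * C := by
    have h3 : c ⬝ᵥ (W *ᵥ c) = ∑ k, ∑ h, W k h * c k * c h := by
      simp only [dotProduct, mulVec, Finset.mul_sum]
      exact Finset.sum_congr rfl fun k _ => Finset.sum_congr rfl fun h _ => by ring
    rw [h3, hC]; ring
  have e2 : (ω *ᵥ (y - x₀)) ⬝ᵥ (W *ᵥ c) = c ⬝ᵥ (y - x₀) := by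
    rw [dotProduct_comm, dotProduct_mulVec]
    nth_rewrite 1 [← hω.eq]
    rw [vecMul_transpose, Matrix.mulVec_mulVec, hωW, Matrix.one_mulVec]
  have e3 : (ω *ᵥ (y - x₀)) ⬝ᵥ (y - x₀) = (y - x₀) ⬝ᵥ (ω *ᵥ (y - x₀)) :=
    dotProduct_comm _ _
  rw [uu]
  simp only [add_dotProduct, dotProduct_add, neg_dotProduct, dotProduct_neg,
    smul_dotProduct, dotProduct_smul, smul_eq_mul]
  rw [e1, e2, e3]
  ring

end GHSSAux


/-- Local existence of solutions of the flat GHSS system (`k₀ = 0`) with an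
arbitrarily prescribed first-order jet `(x₀, c₀, c₁, …, c_n)`. -/
theorem ghss_local_existence
    (n : ℕ) (hn : 1 ≤ n)
    (ω W : Matrix (Fin n) (Fin n) ℝ) (hω : ω.IsSymm) (hW : W.IsSymm)
    (hωW : ω * W = 1) :
    ∀ (x₀ : Fin n → ℝ) (c₀ : ℝ) (c : Fin n → ℝ),
      ∃ ε > (0 : ℝ), ∃ α : (Fin n → ℝ) → ℝ,
        ContDiffOn ℝ (⊤ : ℕ∞) α (Metric.ball x₀ ε) ∧
        α x₀ = c₀ ∧
        (∀ i : Fin n, fderiv ℝ α x₀ (Pi.single i 1) = c i) ∧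
        ∀ x ∈ Metric.ball x₀ ε, ∀ i j : Fin n,
          fderiv ℝ (fun y => fderiv ℝ α y (Pi.single j 1)) x (Pi.single i 1) =
          fderiv ℝ α x (Pi.single i 1) * fderiv ℝ α x (Pi.single j 1) -
          (1/2) * (∑ k, ∑ h,
            W k h * fderiv ℝ α x (Pi.single k 1) * fderiv ℝ α x (Pi.single h 1)) *
            ω i j := by
  intro x₀ c₀ c
  set C : ℝ := (1 / 2) * ∑ k, ∑ h, W k h * c k * c h with hC
  have hcoord : ∀ k : Fin n, ContDiff ℝ (⊤ : ℕ∞) (fun y : Fin n → ℝ => y k - x₀ k) :=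
    fun k => ((ContinuousLinearMap.proj k : (Fin n → ℝ) →L[ℝ] ℝ).contDiff).sub contDiff_const
  have hucd : ContDiff ℝ (⊤ : ℕ∞) (GHSSAux.uu ω c x₀ C) := by
    have hfun : GHSSAux.uu ω c x₀ C = fun y : Fin n → ℝ =>
        (1 - ∑ k, c k * (y k - x₀ k))
          + (C / 2) * ∑ k, (y k - x₀ k) * (∑ l, ω k l * (y l - x₀ l)) := by
      funext z; rw [GHSSAux.uu_eq]
    rw [hfun]
    exact (contDiff_const.sub (ContDiff.sum fun k _ => contDiff_const.mul (hcoord k))).add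
      (contDiff_const.mul (ContDiff.sum fun k _ => (hcoord k).mul
        (ContDiff.sum fun l _ => contDiff_const.mul (hcoord l))))
  have hu0 : GHSSAux.uu ω c x₀ C x₀ = 1 := by simp [GHSSAux.uu]
  have hnhds : {y | 0 < GHSSAux.uu ω c x₀ C y} ∈ nhds x₀ := by
    have hca : ContinuousAt (GHSSAux.uu ω c x₀ C) x₀ := hucd.continuous.continuousAt
    have hmem : GHSSAux.uu ω c x₀ C x₀ ∈ Set.Ioi (0 : ℝ) := by rw [hu0]; norm_num
    simpa [Set.preimage] using hca.preimage_mem_nhds (isOpen_Ioi.mem_nhds hmem)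
  obtain ⟨ε, hε, hball⟩ := Metric.mem_nhds_iff.mp hnhds
  have hpos : ∀ y ∈ Metric.ball x₀ ε, 0 < GHSSAux.uu ω c x₀ C y := fun y hy => hball hy
  refine ⟨ε, hε, fun y => c₀ - Real.log (GHSSAux.uu ω c x₀ C y), ?_, ?_, ?_, ?_⟩
  · exact contDiffOn_const.sub ((hucd.contDiffOn).log fun y hy => (hpos y hy).ne')
  · simp [hu0]
  · intro i
    have hx0 : GHSSAux.uu ω c x₀ C x₀ ≠ 0 := by rw [hu0]; norm_num
    have hαd : HasFDerivAt (fun y => c₀ - Real.log (GHSSAux.uu ω c x₀ C y))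
        (-((GHSSAux.uu ω c x₀ C x₀)⁻¹ • GHSSAux.Du ω c x₀ C x₀)) x₀ :=
      ((GHSSAux.hasFDerivAt_uu ω c x₀ C x₀).log hx0).const_sub c₀
    rw [hαd.fderiv]
    simp only [ContinuousLinearMap.neg_apply, ContinuousLinearMap.smul_apply, smul_eq_mul]
    rw [GHSSAux.Du_apply ω hω c x₀ C x₀ i, hu0]
    simp [GHSSAux.ww]
  · intro x hx i j
    have hne : GHSSAux.uu ω c x₀ C x ≠ 0 := (hpos x hx).ne'
    have hαd : ∀ y, GHSSAux.uu ω c x₀ C y ≠ 0 →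
        HasFDerivAt (fun y => c₀ - Real.log (GHSSAux.uu ω c x₀ C y))
          (-((GHSSAux.uu ω c x₀ C y)⁻¹ • GHSSAux.Du ω c x₀ C y)) y :=
      fun y hy => ((GHSSAux.hasFDerivAt_uu ω c x₀ C y).log hy).const_sub c₀
    have hval : ∀ (m : Fin n) (y : Fin n → ℝ), GHSSAux.uu ω c x₀ C y ≠ 0 →
        fderiv ℝ (fun y => c₀ - Real.log (GHSSAux.uu ω c x₀ C y)) y (Pi.single m 1)
          = -(GHSSAux.ww ω c x₀ C y m * (GHSSAux.uu ω c x₀ C y)⁻¹) := by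
      intro m y hy
      rw [(hαd y hy).fderiv]
      simp only [ContinuousLinearMap.neg_apply, ContinuousLinearMap.smul_apply, smul_eq_mul]
      rw [GHSSAux.Du_apply ω hω c x₀ C y m]
      ring
    have hev : (fun y => fderiv ℝ (fun y => c₀ - Real.log (GHSSAux.uu ω c x₀ C y)) y
          (Pi.single j 1))
        =ᶠ[nhds x] fun y => -(GHSSAux.ww ω c x₀ C y j * (GHSSAux.uu ω c x₀ C y)⁻¹) := by
      filter_upwards [Metric.isOpen_ball.mem_nhds hx] with y hy
      exact hval j y (hpos y hy).ne'
    rw [hev.fderiv_eq]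
    have hinv : HasFDerivAt (fun y => (GHSSAux.uu ω c x₀ C y)⁻¹)
        ((ContinuousLinearMap.smulRight (1 : ℝ →L[ℝ] ℝ)
          (-(GHSSAux.uu ω c x₀ C x ^ 2)⁻¹)).comp (GHSSAux.Du ω c x₀ C x)) x :=
      (hasFDerivAt_inv hne).comp x (GHSSAux.hasFDerivAt_uu ω c x₀ C x)
    have hprod := ((GHSSAux.hasFDerivAt_ww ω c x₀ C j x).fun_mul hinv).fun_neg
    rw [hprod.fderiv]
    rw [hval i x hne, hval j x hne]
    have hsum : (∑ k, ∑ h, W k h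
        * fderiv ℝ (fun y => c₀ - Real.log (GHSSAux.uu ω c x₀ C y)) x (Pi.single k 1)
        * fderiv ℝ (fun y => c₀ - Real.log (GHSSAux.uu ω c x₀ C y)) x (Pi.single h 1))
        = (GHSSAux.uu ω c x₀ C x)⁻¹ * (GHSSAux.uu ω c x₀ C x)⁻¹
            * (2 * C * GHSSAux.uu ω c x₀ C x) := by
      rw [← GHSSAux.key ω W hω hW hωW c x₀ C hC x, Finset.mul_sum]
      refine Finset.sum_congr rfl fun k _ => ?_
      rw [Finset.mul_sum]
      refine Finset.sum_congr rfl fun h _ => ?_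
      rw [hval k x hne, hval h x hne]; ring
    rw [hsum]
    simp only [ContinuousLinearMap.neg_apply, ContinuousLinearMap.add_apply,
      ContinuousLinearMap.smul_apply, ContinuousLinearMap.comp_apply,
      ContinuousLinearMap.smulRight_apply, ContinuousLinearMap.one_apply, smul_eq_mul]
    rw [GHSSAux.Du_apply ω hω c x₀ C x i, GHSSAux.Dw_apply ω C j i, hω.apply i j]
    field_simp
    ring
end
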